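/- arXiv:1809.00617 — 4 statements merged into one kernel-verified Lean document; each statement's English description precedes it below -/
import Mathlib

section
/- Let 𝔅 be the Jacobson radical of the standard principal hereditary order 𝔄 in M_n(ℚ_p) with parameter e. Then for every integer i ≥ 0 one has the inclusions of ℤ_p-submodules p^(⌈(i−1)/e⌉+1)·M_n(ℤ_p) ⊆ 𝔅^i ⊆ p^⌊i/e⌋·M_n(ℤ_p). -/
open scoped Pointwise

noncomputable section

/-- The `ℤ_p`-submodule `p^k ℤ_p` of `ℚ_p`, for `k : ℤ`. -/
def pAdicLat (p : ℕ) [Fact p.Prime] (k : ℤ) : Submodule ℤ_[p] ℚ_[p] :=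
  Submodule.span ℤ_[p] {(p : ℚ_[p]) ^ k}

/-- The `ℤ_p`-submodule of `M_n(ℚ_p)` whose `(i,j)` entry lies in `p^(f i j) ℤ_p`. -/
def blockMod (p : ℕ) [Fact p.Prime] (n m₀ : ℕ) (f : Fin n → Fin n → ℤ) :
    Submodule ℤ_[p] (Matrix (Fin n) (Fin n) ℚ_[p]) where
  carrier := {x | ∀ i j, x i j ∈ pAdicLat p (f i j)}
  add_mem' := fun hx hy i j => add_mem (hx i j) (hy i j)
  zero_mem' := fun i j => zero_mem _
  smul_mem' := fun c x hx i j => Submodule.smul_mem _ c (hx i j)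

/-- The standard principal hereditary order `𝔄` with parameter `e`, blocks of size `m₀`:
entries of the `(a,b)` block (where `a = i/m₀`, `b = j/m₀`) lie in `ℤ_p` if `a ≤ b`
and in `pℤ_p` if `a > b`. -/
def stdOrder (p : ℕ) [Fact p.Prime] (n m₀ : ℕ) :
    Submodule ℤ_[p] (Matrix (Fin n) (Fin n) ℚ_[p]) :=
  blockMod p n m₀ (fun i j => if i.val / m₀ ≤ j.val / m₀ then 0 else 1)

/-- The Jacobson radical `𝔅` of the standard principal hereditary order:
entries of the `(a,b)` block lie in `ℤ_p` if `a < b` and in `pℤ_p` if `a ≥ b`. -/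
def stdRadical (p : ℕ) [Fact p.Prime] (n m₀ : ℕ) :
    Submodule ℤ_[p] (Matrix (Fin n) (Fin n) ℚ_[p]) :=
  blockMod p n m₀ (fun i j => if i.val / m₀ < j.val / m₀ then 0 else 1)

/-- Powers `𝔅^i` of the radical, with the convention `𝔅^0 = 𝔄`. -/
def radPow (p : ℕ) [Fact p.Prime] (n m₀ : ℕ) (i : ℕ) :
    Submodule ℤ_[p] (Matrix (Fin n) (Fin n) ℚ_[p]) :=
  if i = 0 then stdOrder p n m₀ else stdRadical p n m₀ ^ i

/-!
Write `α, β` for the block indices of the entries `a, b`. The power `𝔅^k` is exactly the lattice of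
matrices whose `(a,b)` entry lies in `p^⌈(k + α - β)/e⌉ ℤ_p`; for `k = 0, 1` this is the definition
of `𝔄` and `𝔅`, because `|α - β| < e`. Inductively, `𝔅^(k+1)` lies in that lattice by
subadditivity of the ceiling, and conversely each elementary matrix `p^w E_ab` of the lattice
factors as `E_ac · E_cb` with `c` in the block `γ = α + 1 mod e`, where the ceiling is additive since
`(1 + α - γ)/e` is an integer. As `|α - β| < e`, the exponent lies between `⌊k/e⌋` and
`⌈(k-1)/e⌉ + 1`.
-/

lemma Int.ceil_div_eq_ite {K : Type*} [Field K] [LinearOrder K] [IsStrictOrderedRing K]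
    [FloorRing K] {x e : K} (hlo : -e < x) (hhi : x ≤ e) :
    ⌈x / e⌉ = if x ≤ 0 then 0 else 1 := by
  have he : 0 < e := by linarith
  split_ifs <;>
  · rw [Int.ceil_eq_iff, lt_div_iff₀ he, div_le_iff₀ he]
    constructor <;> push_cast <;> linarith

section Lattices

variable {p : ℕ} [Fact p.Prime]

lemma zpow_mem_pAdicLat {k m : ℤ} (h : m ≤ k) : (p : ℚ_[p]) ^ k ∈ pAdicLat p m := by
  rw [pAdicLat, Submodule.mem_span_singleton]
  refine ⟨(p : ℤ_[p]) ^ (k - m).toNat, ?_⟩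
  rw [Algebra.smul_def, map_pow, map_natCast, ← zpow_natCast, Int.toNat_of_nonneg (by omega),
    ← zpow_add₀ (Nat.cast_ne_zero.mpr (Fact.out : p.Prime).ne_zero), sub_add_cancel]

lemma pAdicLat_mono {k m : ℤ} (h : m ≤ k) : pAdicLat p k ≤ pAdicLat p m := by
  rw [pAdicLat, Submodule.span_le, Set.singleton_subset_iff]
  exact zpow_mem_pAdicLat h

lemma mul_mem_pAdicLat {x y : ℚ_[p]} {k m : ℤ} (hx : x ∈ pAdicLat p k) (hy : y ∈ pAdicLat p m) :
    x * y ∈ pAdicLat p (k + m) := by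
  rw [pAdicLat, Submodule.mem_span_singleton] at hx hy ⊢
  obtain ⟨a, rfl⟩ := hx
  obtain ⟨b, rfl⟩ := hy
  exact ⟨a * b, by
    rw [smul_mul_smul_comm, zpow_add₀ (Nat.cast_ne_zero.mpr (Fact.out : p.Prime).ne_zero)]⟩

variable {n m₀ : ℕ}

lemma blockMod_mono {f g : Fin n → Fin n → ℤ} (h : ∀ i j, g i j ≤ f i j) :
    blockMod p n m₀ f ≤ blockMod p n m₀ g :=
  fun _ hx i j => pAdicLat_mono (h i j) (hx i j)

lemma blockMod_mul_le {f g h : Fin n → Fin n → ℤ} (hfg : ∀ i k j, h i j ≤ f i k + g k j) :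
    blockMod p n m₀ f * blockMod p n m₀ g ≤ blockMod p n m₀ h := by
  refine Submodule.mul_le.mpr fun x hx y hy i j => ?_
  rw [Matrix.mul_apply]
  exact sum_mem fun k _ => pAdicLat_mono (hfg i k j) (mul_mem_pAdicLat (hx i k) (hy k j))

lemma single_zpow_mem_blockMod (f : Fin n → Fin n → ℤ) (a b : Fin n) :
    Matrix.single a b ((p : ℚ_[p]) ^ f a b) ∈ blockMod p n m₀ f := by
  intro i j
  by_cases h : a = i ∧ b = j
  · obtain ⟨rfl, rfl⟩ := h
    rw [Matrix.single_apply_same]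
    exact Submodule.mem_span_singleton_self _
  · rw [Matrix.single_apply, if_neg h]
    exact zero_mem _

lemma blockMod_le_of_single_zpow_mem {f : Fin n → Fin n → ℤ}
    {M : Submodule ℤ_[p] (Matrix (Fin n) (Fin n) ℚ_[p])}
    (h : ∀ a b, Matrix.single a b ((p : ℚ_[p]) ^ f a b) ∈ M) : blockMod p n m₀ f ≤ M := by
  intro x hx
  rw [Matrix.matrix_eq_sum_single x]
  refine sum_mem fun a _ => sum_mem fun b _ => ?_
  obtain ⟨u, hu⟩ := Submodule.mem_span_singleton.mp (hx a b)
  rw [← hu, ← Matrix.smul_single]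
  exact M.smul_mem u (h a b)

end Lattices

section BlockExponent

variable {p : ℕ} [Fact p.Prime] {n e m₀ : ℕ}

lemma blockIndex_lt (hn : n = e * m₀) (a : Fin n) : a.val / m₀ < e :=
  Nat.div_lt_of_lt_mul (by rw [mul_comm, ← hn]; exact a.isLt)

lemma exists_blockIndex_eq (hn : n = e * m₀) (a : Fin n) {γ : ℕ} (hγ : γ < e) :
    ∃ c : Fin n, c.val / m₀ = γ := by
  rcases Nat.eq_zero_or_pos m₀ with rfl | hm
  · rw [mul_zero] at hn
    subst hn
    exact a.elim0
  · exact ⟨⟨γ * m₀, hn ▸ Nat.mul_lt_mul_of_pos_right hγ hm⟩, Nat.mul_div_cancel _ hm⟩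

def radPowExponent (e m₀ k : ℕ) (a b : Fin n) : ℤ :=
  ⌈((k : ℚ) + (a.val / m₀ : ℕ) - (b.val / m₀ : ℕ)) / e⌉

lemma radPowExponent_eq_ite (hn : n = e * m₀) {k : ℕ} (hk : k ≤ 1) (a b : Fin n) :
    radPowExponent e m₀ k a b =
      if (k : ℚ) + (a.val / m₀ : ℕ) - (b.val / m₀ : ℕ) ≤ 0 then 0 else 1 := by
  have ha : ((a.val / m₀ : ℕ) : ℚ) + 1 ≤ e := by exact_mod_cast blockIndex_lt hn a
  have hb : ((b.val / m₀ : ℕ) : ℚ) + 1 ≤ e := by exact_mod_cast blockIndex_lt hn b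
  have hk' : (k : ℚ) ≤ 1 := by exact_mod_cast hk
  have ha₀ : (0 : ℚ) ≤ (a.val / m₀ : ℕ) := Nat.cast_nonneg _
  have hb₀ : (0 : ℚ) ≤ (b.val / m₀ : ℕ) := Nat.cast_nonneg _
  have hk₀ : (0 : ℚ) ≤ k := Nat.cast_nonneg _
  exact Int.ceil_div_eq_ite (by linarith) (by linarith)

lemma stdOrder_eq_blockMod (hn : n = e * m₀) :
    stdOrder p n m₀ = blockMod p n m₀ (radPowExponent e m₀ 0) := by
  unfold stdOrder
  congr 1
  funext a b
  rw [radPowExponent_eq_ite hn zero_le_one]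
  simp only [Nat.cast_zero, zero_add, sub_nonpos, Nat.cast_le]

lemma stdRadical_eq_blockMod (hn : n = e * m₀) :
    stdRadical p n m₀ = blockMod p n m₀ (radPowExponent e m₀ 1) := by
  unfold stdRadical
  congr 1
  funext a b
  rw [radPowExponent_eq_ite hn le_rfl]
  simp only [Nat.cast_one, sub_nonpos]
  norm_cast
  simp only [Nat.one_add_le_iff]

lemma radPowExponent_add_le (k l : ℕ) (a c b : Fin n) :
    radPowExponent e m₀ (k + l) a b ≤ radPowExponent e m₀ k a c + radPowExponent e m₀ l c b := by
  have hsplit := Int.ceil_add_le (((k : ℚ) + (a.val / m₀ : ℕ) - (c.val / m₀ : ℕ)) / e)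
    (((l : ℚ) + (c.val / m₀ : ℕ) - (b.val / m₀ : ℕ)) / e)
  rw [← add_div] at hsplit
  simp only [radPowExponent]
  convert hsplit using 3
  push_cast
  ring

lemma radPowExponent_add_eq (he : 0 < e) {k : ℕ} (l : ℕ) {a c : Fin n} (b : Fin n)
    (hc : c.val / m₀ = (a.val / m₀ + k) % e) :
    radPowExponent e m₀ k a c + radPowExponent e m₀ l c b = radPowExponent e m₀ (k + l) a b := by
  have hmod : ((k : ℚ) + (a.val / m₀ : ℕ) - (c.val / m₀ : ℕ)) / e =
      ((a.val / m₀ + k) / e : ℕ) := by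
    have hdiv : (((a.val / m₀ + k) % e : ℕ) : ℚ) =
        (a.val / m₀ : ℕ) + k - e * ((a.val / m₀ + k) / e : ℕ) := by
      rw [eq_sub_iff_add_eq]
      exact_mod_cast Nat.mod_add_div (a.val / m₀ + k) e
    rw [hc, hdiv]
    field_simp
    ring
  simp only [radPowExponent]
  rw [hmod, Int.ceil_natCast, ← Int.ceil_natCast_add, ← hmod]
  congr 1
  push_cast
  ring

lemma single_zpow_mem_stdRadical_pow (hn : n = e * m₀) (k : ℕ) (a b : Fin n) :
    Matrix.single a b ((p : ℚ_[p]) ^ radPowExponent e m₀ (k + 1) a b) ∈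
      stdRadical p n m₀ ^ (k + 1) := by
  induction k generalizing a with
  | zero =>
    rw [zero_add, pow_one, stdRadical_eq_blockMod hn]
    exact single_zpow_mem_blockMod _ a b
  | succ k ih =>
    have he : 0 < e := (Nat.zero_le _).trans_lt (blockIndex_lt hn a)
    obtain ⟨c, hc⟩ := exists_blockIndex_eq hn a (Nat.mod_lt (a.val / m₀ + 1) he)
    rw [show k + 1 + 1 = 1 + (k + 1) by omega, ← radPowExponent_add_eq he (k + 1) b hc,
      zpow_add₀ (Nat.cast_ne_zero.mpr (Fact.out : p.Prime).ne_zero),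
      ← Matrix.single_mul_single_same (i := a) (j := c) (k := b), pow_add, pow_one]
    refine Submodule.mul_mem_mul ?_ (ih c)
    rw [stdRadical_eq_blockMod hn]
    exact single_zpow_mem_blockMod _ a c

lemma stdRadical_pow_le_blockMod (hn : n = e * m₀) (k : ℕ) :
    stdRadical p n m₀ ^ (k + 1) ≤ blockMod p n m₀ (radPowExponent e m₀ (k + 1)) := by
  induction k with
  | zero => rw [zero_add, pow_one, stdRadical_eq_blockMod hn]
  | succ k ih =>
    rw [pow_succ]
    exact (mul_le_mul' ih (stdRadical_eq_blockMod hn).le).trans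
      (blockMod_mul_le fun a c b => radPowExponent_add_le (k + 1) 1 a c b)

lemma radPow_eq_blockMod (hn : n = e * m₀) :
    ∀ k, radPow p n m₀ k = blockMod p n m₀ (radPowExponent e m₀ k)
  | 0 => by rw [radPow, if_pos rfl, stdOrder_eq_blockMod hn]
  | k + 1 => by
    rw [radPow, if_neg k.succ_ne_zero]
    exact le_antisymm (stdRadical_pow_le_blockMod hn k)
      (blockMod_le_of_single_zpow_mem (single_zpow_mem_stdRadical_pow hn k))

lemma radPowExponent_le (hn : n = e * m₀) (k : ℕ) (a b : Fin n) :
    radPowExponent e m₀ k a b ≤ ⌈((k : ℚ) - 1) / e⌉ + 1 := by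
  have ha : ((a.val / m₀ : ℕ) : ℚ) + 1 ≤ e := by exact_mod_cast blockIndex_lt hn a
  have ha₀ : (0 : ℚ) ≤ (a.val / m₀ : ℕ) := Nat.cast_nonneg _
  have hb₀ : (0 : ℚ) ≤ (b.val / m₀ : ℕ) := Nat.cast_nonneg _
  have he : (0 : ℚ) < e := by linarith
  rw [radPowExponent, ← Int.ceil_add_one, div_add_one he.ne']
  exact Int.ceil_mono (by rw [div_le_div_iff_of_pos_right he]; linarith)

lemma floor_div_le_radPowExponent (hn : n = e * m₀) (k : ℕ) (a b : Fin n) :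
    ⌊(k : ℚ) / e⌋ ≤ radPowExponent e m₀ k a b := by
  have hb : ((b.val / m₀ : ℕ) : ℚ) + 1 ≤ e := by exact_mod_cast blockIndex_lt hn b
  have ha₀ : (0 : ℚ) ≤ (a.val / m₀ : ℕ) := Nat.cast_nonneg _
  have hb₀ : (0 : ℚ) ≤ (b.val / m₀ : ℕ) := Nat.cast_nonneg _
  have he : (0 : ℚ) < e := by linarith
  rw [radPowExponent, Int.le_ceil_iff]
  calc (⌊(k : ℚ) / e⌋ : ℚ) - 1 ≤ k / e - 1 := by linarith [Int.floor_le ((k : ℚ) / e)]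
    _ < _ := by rw [div_sub_one he.ne', div_lt_div_iff_of_pos_right he]; linarith

end BlockExponent

theorem radPow_approximation_general (p : ℕ) [Fact p.Prime] (n e m₀ : ℕ)
    (hn : n = e * m₀) (i : ℕ) :
    blockMod p n m₀ (fun _ _ => ⌈((i : ℚ) - 1) / (e : ℚ)⌉ + 1) ≤ radPow p n m₀ i ∧
      radPow p n m₀ i ≤ blockMod p n m₀ (fun _ _ => ⌊(i : ℚ) / (e : ℚ)⌋) := by
  rw [radPow_eq_blockMod hn]
  exact ⟨blockMod_mono (radPowExponent_le hn i), blockMod_mono (floor_div_le_radPowExponent hn i)⟩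

/-- `p^(⌈(i−1)/e⌉+1)·M_n(ℤ_p) ⊆ 𝔅^i ⊆ p^⌊i/e⌋·M_n(ℤ_p)` for all `i ≥ 0`. -/
theorem radPow_approximation (p : ℕ) [Fact p.Prime] (n e m₀ : ℕ)
    (he : 0 < e) (hm : 0 < m₀) (hn : n = e * m₀) (i : ℕ) :
    blockMod p n m₀ (fun _ _ => ⌈((i : ℚ) - 1) / (e : ℚ)⌉ + 1) ≤ radPow p n m₀ i ∧
      radPow p n m₀ i ≤ blockMod p n m₀ (fun _ _ => ⌊(i : ℚ) / (e : ℚ)⌋) :=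
  radPow_approximation_general p n e m₀ hn i
end
end

section
/- Let 𝔅 be the Jacobson radical of the standard principal hereditary order 𝔄 in M_n(ℚ_p) with parameter e. Let j ≥ 1 be an integer, set t = ⌈j/e⌉ and k = ⌊j/2⌋ + 1, and let β ∈ M_n(ℚ_p) be such that p^t·β ∈ 𝔅^(et−j). Let ψ : (ℚ_p, +) → ℂˣ be a group homomorphism that is trivial on pℤ_p. Then the map x ↦ ψ(Tr(β(x−1))) is a group homomorphism from the multiplicative group U_𝔄(k) = 1 + 𝔅^k to ℂˣ, where Tr denotes the matrix trace. -/
open scoped Pointwise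

noncomputable section

/-!
Write `x = u - 1`, `y = v - 1`. Since `uv - 1 = x + y + xy` and `ψ ∘ Tr` is additive, it suffices that
`Tr (β x y) ∈ pℤ_p`. The `(r, c)` entry of an element of `𝔅^i` (of `𝔄` for `i = 0`) lies in
`p^⌈(i + a - b)/e⌉ ℤ_p`, where `a`, `b` are the blocks of `r`, `c`. These exponents are superadditive
in `i`, so the diagonal entries of `p^t β x y` lie in `p^⌈(et - j + 2k)/e⌉ ℤ_p ⊆ p^(t+1) ℤ_p`,
because `2k > j`.
-/

namespace SimpleCharacter

variable {p : ℕ} [Fact p.Prime]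

section PAdicLattice

lemma norm_natCast_zpow (k : ℤ) : ‖(p : ℚ_[p]) ^ k‖ = (p : ℝ) ^ (-k) := by
  rw [norm_zpow, Padic.norm_p, inv_zpow, ← zpow_neg]

lemma mem_pAdicLat_iff_norm_le {k : ℤ} {x : ℚ_[p]} :
    x ∈ pAdicLat p k ↔ ‖x‖ ≤ (p : ℝ) ^ (-k) := by
  have hp : (p : ℚ_[p]) ≠ 0 := Nat.cast_ne_zero.mpr (Fact.out : p.Prime).ne_zero
  rw [pAdicLat, Submodule.mem_span_singleton]
  constructor
  · rintro ⟨c, rfl⟩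
    rw [Algebra.smul_def, norm_mul, norm_natCast_zpow]
    exact mul_le_of_le_one_left (by positivity) c.2
  · intro hx
    have hp' : (0 : ℝ) < p := by exact_mod_cast (Fact.out : p.Prime).pos
    have hc : ‖x * (p : ℚ_[p]) ^ (-k)‖ ≤ 1 := by
      rwa [norm_mul, norm_natCast_zpow, neg_neg, ← le_div_iff₀ (by positivity), one_div,
        ← zpow_neg]
    refine ⟨⟨_, hc⟩, ?_⟩
    change x * (p : ℚ_[p]) ^ (-k) * (p : ℚ_[p]) ^ k = x
    rw [mul_assoc, ← zpow_add₀ hp, neg_add_cancel, zpow_zero, mul_one]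

lemma pAdicLat_antitone : Antitone (pAdicLat p) := fun k l hkl x hx => by
  rw [mem_pAdicLat_iff_norm_le] at hx ⊢
  have hp : (1 : ℝ) ≤ p := by exact_mod_cast (Fact.out : p.Prime).one_lt.le
  exact hx.trans (zpow_le_zpow_right₀ hp (neg_le_neg hkl))

lemma zpow_mem_pAdicLat (k : ℤ) : (p : ℚ_[p]) ^ k ∈ pAdicLat p k :=
  Submodule.subset_span rfl

lemma mul_mem_pAdicLat {k l : ℤ} {x y : ℚ_[p]} (hx : x ∈ pAdicLat p k)
    (hy : y ∈ pAdicLat p l) : x * y ∈ pAdicLat p (k + l) := by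
  rw [mem_pAdicLat_iff_norm_le] at hx hy ⊢
  have hp : (p : ℝ) ≠ 0 := by exact_mod_cast (Fact.out : p.Prime).ne_zero
  rw [norm_mul, neg_add, zpow_add₀ hp]
  exact mul_le_mul hx hy (norm_nonneg _) (by positivity)

lemma mem_pAdicLat_of_pow_mul_mem {t : ℕ} {k : ℤ} {x : ℚ_[p]}
    (hx : (p : ℚ_[p]) ^ t * x ∈ pAdicLat p (t + k)) : x ∈ pAdicLat p k := by
  have hp : (p : ℚ_[p]) ≠ 0 := Nat.cast_ne_zero.mpr (Fact.out : p.Prime).ne_zero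
  have h := mul_mem_pAdicLat (zpow_mem_pAdicLat (-t)) hx
  rwa [← mul_assoc, ← zpow_natCast, ← zpow_add₀ hp, neg_add_cancel, zpow_zero, one_mul,
    neg_add_cancel_left] at h

end PAdicLattice

section BlockExponent

lemma ceil_intCast_div_eq {e : ℕ} (he : 0 < e) {m z : ℤ} (h₁ : (z - 1) * e < m)
    (h₂ : m ≤ z * e) : ⌈(m : ℚ) / e⌉ = z := by
  have he' : (0 : ℚ) < e := by exact_mod_cast he
  rw [Int.ceil_eq_iff, lt_div_iff₀ he', div_le_iff₀ he']
  exact ⟨by exact_mod_cast h₁, by exact_mod_cast h₂⟩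

def radExp (e i a b : ℕ) : ℤ := ⌈((i + a - b : ℤ) : ℚ) / e⌉

lemma radExp_add_le (e i i' a b c : ℕ) :
    radExp e (i + i') a c ≤ radExp e i a b + radExp e i' b c := by
  have h : (((i + i' : ℕ) + a - c : ℤ) : ℚ) / e
      = ((i + a - b : ℤ) : ℚ) / e + ((i' + b - c : ℤ) : ℚ) / e := by
    rw [← add_div]; push_cast; ring
  unfold radExp
  rw [h]
  exact Int.ceil_add_le _ _

lemma radExp_zero {e a b : ℕ} (ha : a < e) (hb : b < e) :
    radExp e 0 a b = if a ≤ b then 0 else 1 := by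
  unfold radExp
  split_ifs <;> exact ceil_intCast_div_eq (by omega) (by push_cast; omega) (by push_cast; omega)

lemma radExp_one {e a b : ℕ} (ha : a < e) (hb : b < e) :
    radExp e 1 a b = if a < b then 0 else 1 := by
  unfold radExp
  split_ifs <;> exact ceil_intCast_div_eq (by omega) (by push_cast; omega) (by push_cast; omega)

lemma radExp_self (e i a : ℕ) : radExp e i a a = ⌈(i : ℚ) / e⌉ := by
  simp [radExp]

lemma lt_ceil_div {e t N : ℕ} (he : 0 < e) (h : e * t < N) : (t : ℤ) < ⌈(N : ℚ) / e⌉ := by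
  rw [Int.lt_ceil, lt_div_iff₀ (by exact_mod_cast he)]
  exact_mod_cast (mul_comm t e ▸ h)

lemma le_mul_of_eq_ceil_div {e j t : ℕ} (he : 0 < e) (ht : (t : ℤ) = ⌈(j : ℚ) / e⌉) :
    j ≤ e * t := by
  have h : (j : ℚ) / e ≤ t := by exact_mod_cast ht ▸ Int.le_ceil _
  rw [div_le_iff₀ (by exact_mod_cast he)] at h
  exact_mod_cast (by linarith : (j : ℚ) ≤ e * t)

end BlockExponent

section BlockFiltration

variable (p) (n e m₀ : ℕ)

def radLattice (i : ℕ) : Submodule ℤ_[p] (Matrix (Fin n) (Fin n) ℚ_[p]) :=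
  blockMod p n m₀ (fun r c => radExp e i (r / m₀) (c / m₀))

variable {p n e m₀}

lemma mul_mem_blockMod {f g h : Fin n → Fin n → ℤ} (H : ∀ r s c, h r c ≤ f r s + g s c)
    {x y : Matrix (Fin n) (Fin n) ℚ_[p]} (hx : x ∈ blockMod p n m₀ f)
    (hy : y ∈ blockMod p n m₀ g) : x * y ∈ blockMod p n m₀ h := fun r c => by
  rw [Matrix.mul_apply]
  exact Submodule.sum_mem _ fun s _ =>
    pAdicLat_antitone (H r s c) (mul_mem_pAdicLat (hx r s) (hy s c))

lemma mul_mem_radLattice {i i' : ℕ} {x y : Matrix (Fin n) (Fin n) ℚ_[p]}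
    (hx : x ∈ radLattice p n e m₀ i) (hy : y ∈ radLattice p n e m₀ i') :
    x * y ∈ radLattice p n e m₀ (i + i') :=
  mul_mem_blockMod (fun r s c => radExp_add_le e i i' (r / m₀) (s / m₀) (c / m₀)) hx hy

lemma trace_mem_of_mem_radLattice {i : ℕ} {x : Matrix (Fin n) (Fin n) ℚ_[p]}
    (hx : x ∈ radLattice p n e m₀ i) : x.trace ∈ pAdicLat p ⌈(i : ℚ) / e⌉ :=
  Submodule.sum_mem _ fun r _ => radExp_self e i (r / m₀) ▸ hx r r

variable (hn : n = e * m₀)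
include hn

lemma blockIndex_lt (r : Fin n) : (r : ℕ) / m₀ < e :=
  Nat.div_lt_of_lt_mul (by rw [mul_comm, ← hn]; exact r.2)

lemma stdOrder_le_radLattice : stdOrder p n m₀ ≤ radLattice p n e m₀ 0 := fun x hx r c => by
  change x r c ∈ pAdicLat p (radExp e 0 _ _)
  rw [radExp_zero (blockIndex_lt hn r) (blockIndex_lt hn c)]
  exact hx r c

lemma stdRadical_le_radLattice : stdRadical p n m₀ ≤ radLattice p n e m₀ 1 := fun x hx r c => by
  change x r c ∈ pAdicLat p (radExp e 1 _ _)
  rw [radExp_one (blockIndex_lt hn r) (blockIndex_lt hn c)]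
  exact hx r c

lemma stdRadical_pow_le_radLattice {i : ℕ} (hi : 1 ≤ i) :
    stdRadical p n m₀ ^ i ≤ radLattice p n e m₀ i := by
  induction i, hi using Nat.le_induction with
  | base => simpa using stdRadical_le_radLattice hn
  | succ i _ ih =>
    rw [pow_succ, Submodule.mul_le]
    exact fun x hx y hy => mul_mem_radLattice (ih hx) (stdRadical_le_radLattice hn hy)

lemma radPow_le_radLattice (i : ℕ) : radPow p n m₀ i ≤ radLattice p n e m₀ i := by
  unfold radPow
  split_ifs with hi
  · exact hi ▸ stdOrder_le_radLattice hn
  · exact stdRadical_pow_le_radLattice hn (Nat.one_le_iff_ne_zero.mpr hi)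

lemma trace_mul_mul_mem_pAdicLat_one {j t k : ℕ} (he : 0 < e) (ht : (t : ℤ) = ⌈(j : ℚ) / e⌉)
    (hjk : j < k + k) {β x y : Matrix (Fin n) (Fin n) ℚ_[p]}
    (hβ : (p : ℚ_[p]) ^ t • β ∈ radPow p n m₀ (e * t - j))
    (hx : x ∈ stdRadical p n m₀ ^ k) (hy : y ∈ stdRadical p n m₀ ^ k) :
    (β * (x * y)).trace ∈ pAdicLat p 1 := by
  have hjt : j ≤ e * t := le_mul_of_eq_ceil_div he ht
  have hk : 1 ≤ k := by omega
  have hprod : (p : ℚ_[p]) ^ t • β * x * y ∈ radLattice p n e m₀ (e * t - j + k + k) :=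
    mul_mem_radLattice (mul_mem_radLattice (radPow_le_radLattice hn _ hβ)
      (stdRadical_pow_le_radLattice hn hk hx)) (stdRadical_pow_le_radLattice hn hk hy)
  have htrace := pAdicLat_antitone (Int.add_one_le_iff.mpr (lt_ceil_div (t := t) he (by omega)))
    (trace_mem_of_mem_radLattice hprod)
  rw [smul_mul_assoc, smul_mul_assoc, Matrix.trace_smul, smul_eq_mul, mul_assoc] at htrace
  exact mem_pAdicLat_of_pow_mul_mem htrace

end BlockFiltration

end SimpleCharacter

theorem simple_character_hom_general (p : ℕ) [Fact p.Prime] (n e m₀ : ℕ)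
    (he : 0 < e) (hn : n = e * m₀)
    (j : ℕ) (t k : ℕ)
    (ht : (t : ℤ) = ⌈(j : ℚ) / (e : ℚ)⌉) (hk : k = j / 2 + 1)
    (β : Matrix (Fin n) (Fin n) ℚ_[p])
    (hβ : ((p : ℚ_[p]) ^ t) • β ∈ radPow p n m₀ (e * t - j))
    (ψ : AddChar ℚ_[p] ℂˣ)
    (hψ : ∀ x ∈ Submodule.span ℤ_[p] ({(p : ℚ_[p])} : Set ℚ_[p]), ψ x = 1) :
    ∀ u v : Matrix (Fin n) (Fin n) ℚ_[p],
      u - 1 ∈ stdRadical p n m₀ ^ k → v - 1 ∈ stdRadical p n m₀ ^ k →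
      ψ ((β * (u * v - 1)).trace) = ψ ((β * (u - 1)).trace) * ψ ((β * (v - 1)).trace) := by
  intro u v hu hv
  have hcross := SimpleCharacter.trace_mul_mul_mem_pAdicLat_one hn he ht (by omega) hβ hu hv
  rw [pAdicLat, zpow_one] at hcross
  have hdecomp : β * (u * v - 1) = β * ((u - 1) * (v - 1)) + (β * (u - 1) + β * (v - 1)) := by
    noncomm_ring
  rw [hdecomp, Matrix.trace_add, Matrix.trace_add, AddChar.map_add_eq_mul,
    AddChar.map_add_eq_mul, hψ _ hcross, one_mul]

/-- Simple character: with `t = ⌈j/e⌉`, `k = ⌊j/2⌋ + 1` and `β` with `p^t β ∈ 𝔅^(et−j)`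
(i.e. `v_𝔄(β) ≥ −j`), and `ψ` an additive character of `ℚ_p` trivial on `pℤ_p`,
the map `x ↦ ψ(Tr(β(x−1)))` is multiplicative on `U_𝔄(k) = 1 + 𝔅^k`. -/
theorem simple_character_hom (p : ℕ) [Fact p.Prime] (n e m₀ : ℕ)
    (he : 0 < e) (hm : 0 < m₀) (hn : n = e * m₀)
    (j : ℕ) (hj : 1 ≤ j) (t k : ℕ)
    (ht : (t : ℤ) = ⌈(j : ℚ) / (e : ℚ)⌉) (hk : k = j / 2 + 1)
    (β : Matrix (Fin n) (Fin n) ℚ_[p])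
    (hβ : ((p : ℚ_[p]) ^ t) • β ∈ radPow p n m₀ (e * t - j))
    (ψ : AddChar ℚ_[p] ℂˣ)
    (hψ : ∀ x ∈ Submodule.span ℤ_[p] ({(p : ℚ_[p])} : Set ℚ_[p]), ψ x = 1) :
    ∀ u v : Matrix (Fin n) (Fin n) ℚ_[p],
      u - 1 ∈ stdRadical p n m₀ ^ k → v - 1 ∈ stdRadical p n m₀ ^ k →
      ψ ((β * (u * v - 1)).trace) = ψ ((β * (u - 1)).trace) * ψ ((β * (v - 1)).trace) :=
  simple_character_hom_general p n e m₀ he hn j t k ht hk β hβ ψ hψ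
end
end

section
/- Let p be a prime, c ≥ 1 an integer, m ≥ 1 an integer with p ∤ m, and M ≥ 1 a real number. Let γ₁, γ₂ ∈ M_n(ℤ) be integer matrices with det γ₁ = det γ₂ = m, such that: (i) the images of γ₁ and γ₂ in M_n(ℤ/p^c ℤ) commute; (ii) for each i = 1, 2 there exist real orthogonal matrices k, k′ and a real invertible diagonal matrix a with |a_{ll}| ≤ M and |a_{ll}⁻¹| ≤ M for all l, such that γᵢ = m^{1/n}·k a k′ as real matrices. If p^c > m²·(n³M⁴ + 1), then γ₁γ₂ = γ₂γ₁. -/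
open Matrix

lemma kak_entry_bound {n : ℕ} (k k' a : Matrix (Fin n) (Fin n) ℝ) (M : ℝ)
    (hk : k * kᵀ = 1) (hk' : k' * k'ᵀ = 1) (ha : a.IsDiag)
    (haM : ∀ l, |a l l| ≤ M) (i j : Fin n) : |(k * a * k') i j| ≤ M := by
  have hM0 : 0 ≤ M := le_trans (abs_nonneg _) (haM i)
  have hkrow : ∑ l, (k i l) ^ 2 = 1 := by
    have := congrFun (congrFun hk i) i
    simpa [Matrix.mul_apply, Matrix.one_apply, sq] using this
  have hk'2 : k'ᵀ * k' = 1 := mul_eq_one_comm.mp hk'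
  have hk'col : ∑ l, (k' l j) ^ 2 = 1 := by
    have := congrFun (congrFun hk'2 j) j
    simpa [Matrix.mul_apply, Matrix.one_apply, sq] using this
  have hka : ∀ l, (k * a) i l = k i l * a l l := by
    intro l
    rw [Matrix.mul_apply, Finset.sum_eq_single l]
    · intro s _ hs
      rw [ha hs, mul_zero]
    · intro h; exact absurd (Finset.mem_univ l) h
  have hentry : (k * a * k') i j = ∑ l, k i l * a l l * k' l j := by
    rw [Matrix.mul_apply]
    exact Finset.sum_congr rfl fun l _ => by rw [hka l]
  have hcs : (∑ l, |k i l| * |k' l j|) ^ 2 ≤ 1 := by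
    have := Finset.sum_mul_sq_le_sq_mul_sq Finset.univ (fun l => |k i l|) (fun l => |k' l j|)
    simpa [sq_abs, hkrow, hk'col] using this
  have hs0 : 0 ≤ ∑ l, |k i l| * |k' l j| :=
    Finset.sum_nonneg fun l _ => mul_nonneg (abs_nonneg _) (abs_nonneg _)
  have hs1 : ∑ l, |k i l| * |k' l j| ≤ 1 := by nlinarith
  calc |(k * a * k') i j| = |∑ l, k i l * a l l * k' l j| := by rw [hentry]
    _ ≤ ∑ l, |k i l * a l l * k' l j| := Finset.abs_sum_le_sum_abs _ _
    _ ≤ ∑ l, M * (|k i l| * |k' l j|) := by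
        refine Finset.sum_le_sum fun l _ => ?_
        rw [abs_mul, abs_mul]
        calc |k i l| * |a l l| * |k' l j| ≤ |k i l| * M * |k' l j| := by
              exact mul_le_mul_of_nonneg_right
                (mul_le_mul_of_nonneg_left (haM l) (abs_nonneg _)) (abs_nonneg _)
          _ = M * (|k i l| * |k' l j|) := by ring
    _ = M * ∑ l, |k i l| * |k' l j| := by rw [Finset.mul_sum]
    _ ≤ M * 1 := by nlinarith
    _ = M := mul_one M

/-- Abelian structure of Hecke returns (Lemma 4.2): integer matrices of determinant `m`
(coprime to `p`) that commute modulo `p^c` and lie in `ℝ_{>0}·K·A₀·K` archimedeanly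
actually commute, provided `p^c > m²(n³M⁴ + 1)`. -/
theorem hecke_returns_commute (p : ℕ) [Fact p.Prime] (c : ℕ) (hc : 1 ≤ c)
    (m : ℕ) (hm : 1 ≤ m) (hpm : ¬ (p ∣ m)) (M : ℝ) (hM : 1 ≤ M) (n : ℕ)
    (γ₁ γ₂ : Matrix (Fin n) (Fin n) ℤ)
    (hdet₁ : γ₁.det = (m : ℤ)) (hdet₂ : γ₂.det = (m : ℤ))
    (hcomm : (γ₁.map (Int.cast : ℤ → ZMod (p ^ c))) * (γ₂.map (Int.cast : ℤ → ZMod (p ^ c)))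
      = (γ₂.map (Int.cast : ℤ → ZMod (p ^ c))) * (γ₁.map (Int.cast : ℤ → ZMod (p ^ c))))
    (hcartan : ∀ γ ∈ ({γ₁, γ₂} : Set (Matrix (Fin n) (Fin n) ℤ)),
      ∃ k k' a : Matrix (Fin n) (Fin n) ℝ,
        k * kᵀ = 1 ∧ k' * k'ᵀ = 1 ∧ a.IsDiag ∧
        (∀ l, a l l ≠ 0 ∧ |a l l| ≤ M ∧ |(a l l)⁻¹| ≤ M) ∧
        γ.map (Int.cast : ℤ → ℝ) = ((m : ℝ) ^ ((1 : ℝ) / n)) • (k * a * k'))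
    (hpc : (m : ℝ) ^ 2 * (n ^ 3 * M ^ 4 + 1) < (p : ℝ) ^ c) :
    γ₁ * γ₂ = γ₂ * γ₁ := by
  rcases Nat.lt_or_ge n 2 with hn | hn
  · -- small cases n = 0, 1
    interval_cases n
    · ext i j; exact i.elim0
    · ext i j
      fin_cases i <;> fin_cases j <;>
        simp [Matrix.mul_apply, Fin.sum_univ_succ, mul_comm]
  · -- main case n ≥ 2
    have hmr : (1 : ℝ) ≤ (m : ℝ) := by exact_mod_cast hm
    have hm0' : (0 : ℝ) ≤ (m : ℝ) ^ ((1 : ℝ) / n) := Real.rpow_nonneg (by positivity) _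
    set B : ℝ := (m : ℝ) ^ ((1 : ℝ) / n) * M with hBdef
    have hB0 : 0 ≤ B := mul_nonneg hm0' (le_trans zero_le_one hM)
    have hbound : ∀ γ ∈ ({γ₁, γ₂} : Set (Matrix (Fin n) (Fin n) ℤ)),
        ∀ i j, |((γ i j : ℤ) : ℝ)| ≤ B := by
      intro γ hγ i j
      obtain ⟨k, k', a, hk, hk', ha, haM, heq⟩ := hcartan γ hγ
      have h1 : ((γ i j : ℤ) : ℝ) = (m : ℝ) ^ ((1 : ℝ) / n) * (k * a * k') i j := by
        have := congrFun (congrFun heq i) j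
        simpa [Matrix.map_apply, Matrix.smul_apply, smul_eq_mul] using this
      rw [h1, abs_mul, abs_of_nonneg hm0']
      exact mul_le_mul_of_nonneg_left
        (kak_entry_bound k k' a M hk hk' ha (fun l => (haM l).2.1) i j) hm0'
    have hprod : ∀ α β : Matrix (Fin n) (Fin n) ℤ,
        (∀ i j, |((α i j : ℤ) : ℝ)| ≤ B) → (∀ i j, |((β i j : ℤ) : ℝ)| ≤ B) →
        ∀ i j, |(((α * β) i j : ℤ) : ℝ)| ≤ n * B ^ 2 := by
      intro α β hα hβ i j
      have h1 : (((α * β) i j : ℤ) : ℝ) = ∑ l, ((α i l : ℤ) : ℝ) * ((β l j : ℤ) : ℝ) := by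
        rw [Matrix.mul_apply]; push_cast; ring
      rw [h1]
      calc |∑ l, ((α i l : ℤ) : ℝ) * ((β l j : ℤ) : ℝ)|
          ≤ ∑ l, |((α i l : ℤ) : ℝ) * ((β l j : ℤ) : ℝ)| := Finset.abs_sum_le_sum_abs _ _
        _ ≤ ∑ _l : Fin n, B ^ 2 := by
            refine Finset.sum_le_sum fun l _ => ?_
            rw [abs_mul, sq]
            exact mul_le_mul (hα i l) (hβ l j) (abs_nonneg _) hB0
        _ = n * B ^ 2 := by simp [Finset.sum_const, Finset.card_univ, mul_comm]
    have h1mem : γ₁ ∈ ({γ₁, γ₂} : Set (Matrix (Fin n) (Fin n) ℤ)) := Or.inl rfl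
    have h2mem : γ₂ ∈ ({γ₁, γ₂} : Set (Matrix (Fin n) (Fin n) ℤ)) := Or.inr rfl
    -- bound on B^2: B^2 ≤ m * M^2
    have hBsq : B ^ 2 ≤ (m : ℝ) * M ^ 2 := by
      have h2 : ((m : ℝ) ^ ((1 : ℝ) / n)) ^ 2 = (m : ℝ) ^ ((2 : ℝ) / n) := by
        rw [← Real.rpow_natCast ((m : ℝ) ^ ((1 : ℝ) / n)) 2,
          ← Real.rpow_mul (by positivity)]
        congr 1; push_cast; ring
      have h3 : (m : ℝ) ^ ((2 : ℝ) / n) ≤ (m : ℝ) ^ (1 : ℝ) := by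
        apply Real.rpow_le_rpow_of_exponent_le hmr
        rw [div_le_one (by positivity : (0:ℝ) < (n:ℝ))]
        exact_mod_cast hn
      rw [hBdef, mul_pow, h2]
      have hM2 : (0:ℝ) ≤ M ^ 2 := sq_nonneg M
      calc (m : ℝ) ^ ((2 : ℝ) / n) * M ^ 2 ≤ (m : ℝ) ^ (1 : ℝ) * M ^ 2 :=
            mul_le_mul_of_nonneg_right h3 hM2
        _ = (m : ℝ) * M ^ 2 := by rw [Real.rpow_one]
    ext i j
    -- divisibility
    have hent : (((γ₁ * γ₂) i j : ℤ) : ZMod (p ^ c)) = (((γ₂ * γ₁) i j : ℤ) : ZMod (p ^ c)) := by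
      have h := congrFun (congrFun hcomm i) j
      simp only [Matrix.mul_apply, Matrix.map_apply] at h
      push_cast [Matrix.mul_apply]
      exact h
    have hdvd : ((p : ℤ) ^ c) ∣ ((γ₂ * γ₁) i j - (γ₁ * γ₂) i j) := by
      have := (ZMod.intCast_eq_intCast_iff _ _ _).mp hent
      exact_mod_cast this.dvd
    -- size bound
    have hlt : |(γ₂ * γ₁) i j - (γ₁ * γ₂) i j| < (p : ℤ) ^ c := by
      have hb1 := hprod γ₁ γ₂ (hbound γ₁ h1mem) (hbound γ₂ h2mem) i j
      have hb2 := hprod γ₂ γ₁ (hbound γ₂ h2mem) (hbound γ₁ h1mem) i j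
      have hreal : |(((γ₂ * γ₁) i j - (γ₁ * γ₂) i j : ℤ) : ℝ)| < (p : ℝ) ^ c := by
        have habs : |(((γ₂ * γ₁) i j - (γ₁ * γ₂) i j : ℤ) : ℝ)|
            ≤ 2 * (n : ℝ) * B ^ 2 := by
          push_cast
          calc |((γ₂ * γ₁) i j : ℝ) - ((γ₁ * γ₂) i j : ℝ)|
              ≤ |((γ₂ * γ₁) i j : ℝ)| + |((γ₁ * γ₂) i j : ℝ)| := abs_sub _ _
            _ ≤ n * B ^ 2 + n * B ^ 2 := add_le_add hb2 hb1
            _ = 2 * (n : ℝ) * B ^ 2 := by ring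
        have hn' : (2 : ℝ) ≤ (n : ℝ) := by exact_mod_cast hn
        have hfin : 2 * (n : ℝ) * B ^ 2 ≤ (m : ℝ) ^ 2 * (n ^ 3 * M ^ 4 + 1) := by
          have hstep : 2 * (n : ℝ) * B ^ 2 ≤ 2 * (n : ℝ) * ((m : ℝ) * M ^ 2) := by
            have h0 : (0:ℝ) ≤ 2 * (n:ℝ) := by positivity
            nlinarith
          have key : 2 * (n:ℝ) * ((m:ℝ) * M^2) ≤ (m:ℝ)^2 * ((n:ℝ)^3 * M^4) := by
            have h1 : 2 * (n:ℝ) * ((m:ℝ) * M^2) = ((m:ℝ)*(n:ℝ)*M^2) * 2 := by ring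
            have h2 : (m:ℝ)^2 * ((n:ℝ)^3 * M^4) = ((m:ℝ)*(n:ℝ)*M^2) * ((m:ℝ)*(n:ℝ)^2*M^2) := by
              ring
            rw [h1, h2]
            refine mul_le_mul_of_nonneg_left ?_ (by positivity)
            nlinarith [hmr, hn', hM, sq_nonneg M, sq_nonneg ((n:ℝ) - 2)]
          nlinarith [key, hstep, sq_nonneg (m:ℝ), hmr]
        linarith
      have h2 : ((|(γ₂ * γ₁) i j - (γ₁ * γ₂) i j| : ℤ) : ℝ) < (p : ℝ) ^ c := by
        rw [Int.cast_abs]; exact hreal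
      exact_mod_cast h2
    have hz := Int.eq_zero_of_abs_lt_dvd hdvd hlt
    linarith [sub_eq_zero.mp hz]
end

section
/- Let A be a commutative ring that is a reduced finite-dimensional ℚ-algebra with dim_ℚ A ≤ n, and let R ≥ 0 be a real number. Then the set of elements a ∈ A that are roots of some monic polynomial f ∈ ℤ[X] of degree n all of whose roots in ℂ have absolute value at most R is finite. -/
/-!
A reduced artinian ring is a finite product of fields, so a monic polynomial has only finitely
many roots in it. The coefficients of a monic `f` of degree `n` are elementary symmetric functions
of its complex roots, so a bound on the roots bounds them; hence only finitely many integer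
polynomials `f` occur.
-/

open Polynomial

namespace Polynomial

theorem finite_setOf_natDegree_le_coeff_mem {R : Type*} [Semiring R] (d : ℕ) {U : Set R}
    (hU : U.Finite) : {f : R[X] | f.natDegree ≤ d ∧ ∀ i, f.coeff i ∈ U}.Finite := by
  let coeffs : R[X] → Fin (d + 1) → R := fun f i => f.coeff i
  refine ((Set.Finite.pi fun _ => hU).subset ?_).of_finite_image (f := coeffs) ?_
  · exact Set.image_subset_iff.2 fun f hf i _ => hf.2 i
  · exact fun f hf g hg hfg => (ext_iff_natDegree_le hf.1 hg.1).2 fun i hi =>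
      congr_fun hfg ⟨i, Nat.lt_succ_of_le hi⟩

theorem finite_setOf_isRoot_of_monic {A : Type*} [CommRing A] [IsReduced A] [IsArtinianRing A]
    {p : A[X]} (hp : p.Monic) : {a : A | p.IsRoot a}.Finite := by
  let residues : A → ∀ m : MaximalSpectrum A, A ⧸ m.asIdeal :=
    fun a m => Ideal.Quotient.mk _ a
  have hinj : residues.Injective := fun a b hab => (IsArtinianRing.equivPi A).injective <| by
    ext m
    simpa [IsArtinianRing.equivPi_apply] using congrFun hab m
  have hroots : ∀ m : MaximalSpectrum A,
      {x : A ⧸ m.asIdeal | (p.map (Ideal.Quotient.mk _)).IsRoot x}.Finite := fun m =>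
    finite_setOfPred_isRoot (hp.map _).ne_zero
  refine ((Set.Finite.pi (t := fun _ => _) hroots).preimage hinj.injOn).subset fun a ha m _ => ?_
  simpa [residues, IsRoot, eval_map_algebraMap] using congrArg (Ideal.Quotient.mk m.asIdeal) ha

theorem finite_setOf_aeval_eq_zero_of_monic {R A : Type*} [CommRing R] [CommRing A]
    [IsReduced A] [IsArtinianRing A] [Algebra R A] {f : R[X]} (hf : f.Monic) :
    {a : A | aeval a f = 0}.Finite := by
  simpa [aeval_def, eval_map] using finite_setOf_isRoot_of_monic (hf.map (algebraMap R A))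

theorem norm_coeff_le_of_norm_complex_roots_le {f : ℤ[X]} (hf : f.Monic) {d : ℕ}
    (hdeg : f.natDegree ≤ d) {R : ℝ} (hR : ∀ z : ℂ, aeval z f = 0 → ‖z‖ ≤ R)
    (i : ℕ) :
    ‖f.coeff i‖ ≤ max R 1 ^ d * d.choose (d / 2) := by
  have hroots : ∀ z ∈ (f.map (Int.castRingHom ℂ)).roots, ‖z‖ ≤ R := fun z hz =>
    hR z (by simpa [aeval_def, eval_map] using isRoot_of_mem_roots hz)
  simpa [Int.norm_eq_abs] using coeff_bdd_of_roots_le _ hf (IsAlgClosed.splits _) hdeg hroots i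

end Polynomial

theorem fiber_finiteness_general (n : ℕ) (A : Type*) [CommRing A] [IsReduced A]
    [Algebra ℚ A] [FiniteDimensional ℚ A]
    (R : ℝ) :
    {a : A | ∃ f : Polynomial ℤ, f.Monic ∧ f.natDegree = n ∧
      (∀ z : ℂ, Polynomial.aeval z f = 0 → ‖z‖ ≤ R) ∧
      Polynomial.aeval a f = 0}.Finite := by
  have : IsArtinianRing A := IsArtinianRing.of_finite ℚ A
  set B := max R 1 ^ n * n.choose (n / 2)
  have hpolys := (finite_setOf_natDegree_le_coeff_mem n
    ((isCompact_closedBall (0 : ℤ) B).finite DiscreteTopology.isDiscrete)).inter_of_left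
    {f | f.Monic}
  refine (hpolys.biUnion fun f hf => finite_setOf_aeval_eq_zero_of_monic hf.2).subset ?_
  rintro a ⟨f, hmon, hdeg, hroots, ha⟩
  refine Set.mem_biUnion ⟨⟨hdeg.le, fun i => ?_⟩, hmon⟩ ha
  exact mem_closedBall_zero_iff.2
    (norm_coeff_le_of_norm_complex_roots_le hmon hdeg.le hroots i)

/-- In a reduced commutative `ℚ`-algebra of dimension at most `n`, the set of elements
satisfying some monic integer polynomial of degree `n` with all complex roots of absolute
value at most `R` is finite. -/
theorem fiber_finiteness (n : ℕ) (hn : 1 ≤ n) (A : Type*) [CommRing A] [IsReduced A]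
    [Algebra ℚ A] [FiniteDimensional ℚ A] (hdim : Module.finrank ℚ A ≤ n)
    (R : ℝ) (hR : 0 ≤ R) :
    {a : A | ∃ f : Polynomial ℤ, f.Monic ∧ f.natDegree = n ∧
      (∀ z : ℂ, Polynomial.aeval z f = 0 → ‖z‖ ≤ R) ∧
      Polynomial.aeval a f = 0}.Finite :=
  fiber_finiteness_general n A R
end
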